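/- arXiv:1304.2699 — 3 statements merged into one kernel-verified Lean document; each statement's English description precedes it below -/
import Mathlib

section
/- Let w : ℕ² → ℂ and f : ℕ → ℂ be arbitrary functions. For every n ∈ ℕ, Σ_{k ∈ Reg_n} w(k,n) f(gcd(k,n)) = Σ_{d || n} f(d) · Σ_{1 ≤ j ≤ n/d, gcd(j, n/d)=1} w(dj, n), where the outer sum on the right runs over the unitary divisors d of n. -/
open Finset
open scoped Classical

/-- `k` is regular (mod `n`): there is an integer `x` with `k² x ≡ k (mod n)`. -/
def IsRegularMod (k n : ℕ) : Prop := ∃ x : ℤ, (n : ℤ) ∣ (k : ℤ) ^ 2 * x - (k : ℤ)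

/-- `Reg_n`, the set of `k ∈ {1,…,n}` that are regular (mod `n`). -/
noncomputable def Reg (n : ℕ) : Finset ℕ :=
  (Finset.Icc 1 n).filter fun k => IsRegularMod k n

/-- The unitary divisors of `n`: divisors `d` of `n` with `gcd(d, n/d) = 1`. -/
def unitaryDivisors (n : ℕ) : Finset ℕ := n.divisors.filter fun d => Nat.Coprime d (n / d)

/-!
Write `d = gcd(k, n)`, `k = d a`, `n = d m` with `gcd(a, m) = 1`. Then `n ∣ k² x - k` means
`m ∣ a (k x - 1)`, i.e. `k x ≡ 1 (mod m)`, so `k` is regular iff `gcd(k, m) = 1`, iff `d` is a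
unitary divisor of `n`. Grouping `Reg_n` by `gcd(k, n)`, the fibre over a unitary divisor `d` is
`{d j : 1 ≤ j ≤ n / d, gcd(j, n / d) = 1}`, on which `f (gcd(k, n)) = f d`.
-/

theorem Int.exists_dvd_mul_sub_one_iff_isCoprime {a b : ℤ} :
    (∃ x, b ∣ a * x - 1) ↔ IsCoprime a b := by
  constructor
  · rintro ⟨x, c, hc⟩
    exact ⟨x, -c, by linear_combination hc⟩
  · rintro ⟨u, v, h⟩
    exact ⟨u, -v, by linear_combination h⟩

theorem isRegularMod_iff_coprime_div_gcd {k n : ℕ} (hn : 0 < n) :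
    IsRegularMod k n ↔ Nat.Coprime k (n / Nat.gcd k n) := by
  set d := Nat.gcd k n
  have hd : 0 < d := Nat.gcd_pos_of_pos_right k hn
  have hcop : Nat.Coprime (k / d) (n / d) := Nat.coprime_div_gcd_div_gcd hd
  obtain ⟨a, ha⟩ : d ∣ k := Nat.gcd_dvd_left _ _
  obtain ⟨m, hm⟩ : d ∣ n := Nat.gcd_dvd_right _ _
  clear_value d
  subst ha hm
  simp only [Nat.mul_div_cancel_left _ hd] at hcop ⊢
  have hd' : (d : ℤ) ≠ 0 := by exact_mod_cast hd.ne'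
  have hdvd (x : ℤ) : ((d * m : ℕ) : ℤ) ∣ ((d * a : ℕ) : ℤ) ^ 2 * x - (d * a : ℕ) ↔
      (m : ℤ) ∣ (d * a : ℕ) * x - 1 := by
    have hfactor : ((d * a : ℕ) : ℤ) ^ 2 * x - (d * a : ℕ) = d * (a * ((d * a : ℕ) * x - 1)) := by
      push_cast; ring
    rw [hfactor, Nat.cast_mul, mul_dvd_mul_iff_left hd']
    exact ⟨hcop.symm.isCoprime.dvd_of_dvd_mul_left, (Dvd.dvd.mul_left · _)⟩
  simp only [IsRegularMod, hdvd, Int.exists_dvd_mul_sub_one_iff_isCoprime,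
    Nat.isCoprime_iff_coprime]

theorem isRegularMod_iff_gcd_mem_unitaryDivisors {k n : ℕ} (hn : 0 < n) :
    IsRegularMod k n ↔ Nat.gcd k n ∈ unitaryDivisors n := by
  rw [isRegularMod_iff_coprime_div_gcd hn, unitaryDivisors, mem_filter, Nat.mem_divisors]
  have hcop := Nat.coprime_div_gcd_div_gcd (Nat.gcd_pos_of_pos_right k hn)
  nth_rw 1 [← Nat.mul_div_cancel' (Nat.gcd_dvd_left k n)]
  rw [Nat.coprime_mul_iff_left, and_iff_left hcop]
  simp [Nat.gcd_dvd_right, hn.ne']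

theorem Nat.gcd_mul_eq_of_coprime_div {d j n : ℕ} (hd : d ∣ n) (hj : Nat.Coprime j (n / d)) :
    Nat.gcd (d * j) n = d := by
  conv_lhs => rw [← Nat.mul_div_cancel' hd]
  rw [Nat.gcd_mul_left, hj.gcd_eq_one, mul_one]

theorem gcd_mem_unitaryDivisors_of_mem_reg {k n : ℕ} (hk : k ∈ Reg n) :
    Nat.gcd k n ∈ unitaryDivisors n := by
  obtain ⟨hk, hreg⟩ := mem_filter.1 hk
  obtain ⟨hk1, hkn⟩ := mem_Icc.1 hk
  exact (isRegularMod_iff_gcd_mem_unitaryDivisors (hk1.trans hkn)).1 hreg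

theorem reg_filter_gcd_eq_image {n d : ℕ} (hd : d ∈ unitaryDivisors n) :
    (Reg n).filter (fun k => Nat.gcd k n = d) =
      ((Icc 1 (n / d)).filter fun j => Nat.Coprime j (n / d)).image (d * ·) := by
  obtain ⟨hdn, hn⟩ := Nat.mem_divisors.1 (mem_filter.1 hd).1
  have hd0 : 0 < d := Nat.pos_of_mem_divisors (mem_filter.1 hd).1
  ext k
  simp only [Reg, mem_filter, mem_Icc, mem_image]
  constructor
  · rintro ⟨⟨⟨hk1, hkn⟩, -⟩, rfl⟩
    have hdk := Nat.gcd_dvd_left k n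
    exact ⟨k / Nat.gcd k n,
      ⟨⟨Nat.div_pos (Nat.le_of_dvd hk1 hdk) hd0, Nat.div_le_div_right hkn⟩,
        Nat.coprime_div_gcd_div_gcd hd0⟩, Nat.mul_div_cancel' hdk⟩
  · rintro ⟨j, ⟨⟨hj1, hjn⟩, hj⟩, rfl⟩
    have hgcd := Nat.gcd_mul_eq_of_coprime_div hdn hj
    refine ⟨⟨⟨Nat.mul_pos hd0 hj1, ?_⟩, ?_⟩, hgcd⟩
    · calc d * j ≤ d * (n / d) := Nat.mul_le_mul_left d hjn
        _ = n := Nat.mul_div_cancel' hdn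
    · rw [isRegularMod_iff_gcd_mem_unitaryDivisors (Nat.pos_of_ne_zero hn), hgcd]
      exact hd

theorem sum_reg_weighted_general (w : ℕ → ℕ → ℂ) (f : ℕ → ℂ) (n : ℕ) :
    ∑ k ∈ Reg n, w k n * f (Nat.gcd k n) =
      ∑ d ∈ unitaryDivisors n, f d *
        ∑ j ∈ (Finset.Icc 1 (n / d)).filter fun j => Nat.Coprime j (n / d), w (d * j) n := by
  rw [← sum_fiberwise_of_maps_to fun _ => gcd_mem_unitaryDivisors_of_mem_reg]
  refine sum_congr rfl fun d hd => ?_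
  have hd0 : 0 < d := Nat.pos_of_mem_divisors (mem_filter.1 hd).1
  calc ∑ k ∈ Reg n with Nat.gcd k n = d, w k n * f (Nat.gcd k n)
      = f d * ∑ k ∈ Reg n with Nat.gcd k n = d, w k n := by
        rw [mul_sum]
        exact sum_congr rfl fun k hk => by rw [(mem_filter.1 hk).2, mul_comm]
    _ = _ := by
        rw [reg_filter_gcd_eq_image hd, sum_image fun _ _ _ _ => Nat.eq_of_mul_eq_mul_left hd0]

theorem sum_reg_weighted (w : ℕ → ℕ → ℂ) (f : ℕ → ℂ) (n : ℕ) (hn : 1 ≤ n) :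
    ∑ k ∈ Reg n, w k n * f (Nat.gcd k n) =
      ∑ d ∈ unitaryDivisors n, f d *
        ∑ j ∈ (Finset.Icc 1 (n / d)).filter fun j => Nat.Coprime j (n / d), w (d * j) n :=
  sum_reg_weighted_general w f n
end

section
/- For every n, r ∈ ℕ (n, r ≥ 1), Σ_{k ∈ Reg_n} k^r = n^r/2 + (n^r/(r+1)) · Σ_{m=0}^{⌊r/2⌋} C(r+1, 2m) B_{2m} ρ_{1−2m}(n), where ρ_{1−2m}(n) = n^{1−2m} Π_{p^ν || n} (p^{(2m−1)ν} − p^{2m−1} + 1), the product running over the prime powers p^ν exactly dividing n (i.e., p^ν | n and p^{ν+1} ∤ n). -/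
open Finset
open scoped Classical

/-- `ρ_{1-2m}(n) = n^{1-2m} ∏_{p^ν ∥ n} (p^{(2m-1)ν} - p^{2m-1} + 1)`,
the product running over the prime powers `p^ν` exactly dividing `n`. -/
noncomputable def rhoOneSubTwoM (m n : ℕ) : ℝ :=
  (n : ℝ) ^ ((1 : ℤ) - 2 * m) *
    ∏ p ∈ n.primeFactors,
      ((p : ℝ) ^ ((2 * (m : ℤ) - 1) * (n.factorization p : ℤ)) -
        (p : ℝ) ^ (2 * (m : ℤ) - 1) + 1)

/-!
`k` is regular mod `n` exactly when `d = gcd(k, n)` is a unitary divisor of `n`, and then `k = d j`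
with `1 ≤ j ≤ n / d` coprime to `n / d`. Removing the coprimality condition by Möbius inversion and
summing the powers with Faulhaber's formula gives
`∑_{k ∈ Reg n} k^r = ∑_i B'_i C(r+1, i) n^{r+1-i} / (r+1) · V(i - 1)` (with `B'_1 = +1/2`), where
`V(s) = ∑_{d ∥ n} ∑_{e ∣ n/d} μ(e) (d e)^s`. Unitary divisors of `n` correspond to sets of prime
factors of `n`, which factors `V(s)` as `∏_{p^ν ∥ n} (p^{sν} - p^s + 1)`. Finally `B'_i = 0` for
odd `i > 1`, the term `i = 1` is `n^r / 2`, and `n^{1-2m} V(2m - 1) = ρ_{1-2m}(n)`.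
-/

open ArithmeticFunction
open scoped ArithmeticFunction.Moebius

namespace Nat

def unitaryDivisors (n : ℕ) : Finset ℕ := n.divisors.filter fun d => Coprime d (n / d)

theorem mem_unitaryDivisors {n d : ℕ} :
    d ∈ n.unitaryDivisors ↔ (d ∣ n ∧ n ≠ 0) ∧ Coprime d (n / d) := by
  rw [unitaryDivisors, mem_filter, mem_divisors]

theorem sum_Icc_filter_dvd_eq {M : Type*} [AddCommMonoid M] (f : ℕ → M) (m e : ℕ) :
    ∑ j ∈ Icc 1 m with e ∣ j, f j = ∑ i ∈ Icc 1 (m / e), f (e * i) := by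
  rcases eq_or_ne e 0 with rfl | he
  · simp [filter_eq']
  rw [← sum_image fun _ _ _ _ h => Nat.eq_of_mul_eq_mul_left (Nat.pos_of_ne_zero he) h]
  refine sum_congr (ext fun j => ?_) fun _ _ => rfl
  simp only [mem_filter, mem_Icc, mem_image, Nat.le_div_iff_mul_le (Nat.pos_of_ne_zero he)]
  constructor
  · rintro ⟨⟨hj, hjm⟩, i, rfl⟩
    exact ⟨i, ⟨Nat.pos_of_mul_pos_left hj, by rwa [mul_comm]⟩, rfl⟩
  · rintro ⟨i, ⟨hi, him⟩, rfl⟩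
    exact ⟨⟨Nat.mul_pos (Nat.pos_of_ne_zero he) hi, by rwa [mul_comm]⟩, dvd_mul_right e i⟩

theorem sum_Icc_filter_gcd_eq {M : Type*} [AddCommMonoid M] (f : ℕ → M) {n d : ℕ} (hn : n ≠ 0)
    (hd : d ∣ n) :
    ∑ k ∈ Icc 1 n with k.gcd n = d, f k =
      ∑ j ∈ Icc 1 (n / d) with j.Coprime (n / d), f (d * j) := by
  obtain ⟨m, rfl⟩ := hd
  have hd0 : 0 < d := Nat.pos_of_ne_zero (left_ne_zero_of_mul hn)
  rw [Nat.mul_div_cancel_left m hd0,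
    ← sum_image fun _ _ _ _ h => Nat.eq_of_mul_eq_mul_left hd0 h]
  refine sum_congr (ext fun k => ?_) fun _ _ => rfl
  simp only [mem_filter, mem_Icc, mem_image]
  constructor
  · rintro ⟨⟨hk, hkn⟩, hgcd⟩
    obtain ⟨j, rfl⟩ : d ∣ k := hgcd ▸ Nat.gcd_dvd_left _ _
    rw [Nat.gcd_mul_left] at hgcd
    refine ⟨j, ⟨⟨Nat.pos_of_mul_pos_left hk, Nat.le_of_mul_le_mul_left hkn hd0⟩, ?_⟩, rfl⟩
    exact Nat.eq_of_mul_eq_mul_left hd0 (hgcd.trans (mul_one d).symm)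
  · rintro ⟨j, ⟨⟨hj, hjm⟩, hcop⟩, rfl⟩
    refine ⟨⟨Nat.mul_pos hd0 hj, Nat.mul_le_mul_left d hjm⟩, ?_⟩
    rw [Nat.gcd_mul_left, hcop.gcd_eq_one, mul_one]

theorem sum_Icc_filter_coprime_eq_sum_moebius {M : Type*} [AddCommGroup M] (f : ℕ → M) (m : ℕ) :
    ∑ j ∈ Icc 1 m with j.Coprime m, f j =
      ∑ e ∈ m.divisors, μ e • ∑ i ∈ Icc 1 (m / e), f (e * i) := by
  rcases eq_or_ne m 0 with rfl | hm
  · simp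
  have hcoprime :
      ∀ j, (if j.Coprime m then f j else 0) = ∑ e ∈ m.divisors with e ∣ j, μ e • f j := by
    intro j
    have hdiv : {e ∈ m.divisors | e ∣ j} = (m.gcd j).divisors := by
      ext e
      simp [Nat.dvd_gcd_iff, hm, Nat.gcd_eq_zero_iff]
    rw [← sum_smul, hdiv, ← coe_mul_zeta_apply, moebius_mul_coe_zeta, one_apply]
    simp [Nat.coprime_comm, Nat.Coprime]
  simp_rw [← sum_Icc_filter_dvd_eq, sum_filter, hcoprime, sum_filter, smul_sum]
  rw [sum_comm]
  simp only [smul_ite, smul_zero]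

theorem primeFactors_div_of_mem_unitaryDivisors {n d : ℕ} (hd : d ∈ n.unitaryDivisors) :
    (n / d).primeFactors = n.primeFactors \ d.primeFactors := by
  obtain ⟨⟨hdn, -⟩, hcop⟩ := mem_unitaryDivisors.1 hd
  conv_rhs => rw [← Nat.mul_div_cancel' hdn, hcop.primeFactors_mul]
  exact (union_sdiff_cancel_left hcop.disjoint_primeFactors).symm

theorem primeFactors_prod_pow_factorization {n : ℕ} {S : Finset ℕ} (hS : S ⊆ n.primeFactors) :
    (∏ p ∈ S, p ^ n.factorization p).primeFactors = S := by
  have hprime : ∀ p ∈ S, p.Prime := fun p hp => prime_of_mem_primeFactors (hS hp)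
  ext q
  rw [mem_primeFactors_of_ne_zero
    (prod_ne_zero_iff.2 fun p hp => pow_ne_zero _ (hprime p hp).ne_zero)]
  constructor
  · rintro ⟨hq, hdvd⟩
    obtain ⟨p, hp, hqp⟩ := (Prime.dvd_finsetProd_iff hq.prime _).1 hdvd
    rwa [(prime_dvd_prime_iff_eq hq (hprime p hp)).1 (hq.dvd_of_dvd_pow hqp)]
  · intro hq
    refine ⟨hprime q hq, dvd_trans ?_ (dvd_prod_of_mem _ hq)⟩
    exact dvd_pow_self q (Finsupp.mem_support_iff.1 (n.support_factorization ▸ hS hq))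

theorem prod_primeFactors_pow_factorization_of_mem_unitaryDivisors {n d : ℕ}
    (hd : d ∈ n.unitaryDivisors) : ∏ p ∈ d.primeFactors, p ^ n.factorization p = d := by
  obtain ⟨⟨hdn, hn⟩, hcop⟩ := mem_unitaryDivisors.1 hd
  conv_rhs => rw [prod_primeFactors_pow_factorization (ne_zero_of_dvd_ne_zero hn hdn)]
  refine prod_congr rfl fun p hp => ?_
  rw [← Nat.mul_div_cancel' hdn,
    factorization_eq_of_coprime_left hcop (mem_primeFactors_iff_mem_primeFactorsList.1 hp)]

theorem prod_pow_factorization_mem_unitaryDivisors {n : ℕ} (hn : n ≠ 0) {S : Finset ℕ}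
    (hS : S ⊆ n.primeFactors) : ∏ p ∈ S, p ^ n.factorization p ∈ n.unitaryDivisors := by
  set a := ∏ p ∈ S, p ^ n.factorization p
  set b := ∏ p ∈ n.primeFactors \ S, p ^ n.factorization p
  have hab : a * b = n := by
    rw [mul_comm, prod_sdiff hS, ← prod_primeFactors_pow_factorization hn]
  have ha : a ≠ 0 := left_ne_zero_of_mul (hab ▸ hn)
  have hb : b ≠ 0 := right_ne_zero_of_mul (hab ▸ hn)
  rw [mem_unitaryDivisors, ← hab, Nat.mul_div_cancel_left b (Nat.pos_of_ne_zero ha)]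
  refine ⟨⟨dvd_mul_right a b, hab ▸ hn⟩, (disjoint_primeFactors ha hb).1 ?_⟩
  rw [primeFactors_prod_pow_factorization hS, primeFactors_prod_pow_factorization sdiff_subset]
  exact disjoint_sdiff

theorem sum_unitaryDivisors_eq_sum_powerset {M : Type*} [AddCommMonoid M] (f : ℕ → M) {n : ℕ}
    (hn : n ≠ 0) :
    ∑ d ∈ n.unitaryDivisors, f d =
      ∑ S ∈ n.primeFactors.powerset, f (∏ p ∈ S, p ^ n.factorization p) := by
  refine sum_nbij' primeFactors (fun S => ∏ p ∈ S, p ^ n.factorization p) (fun d hd => ?_)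
    (fun S hS => prod_pow_factorization_mem_unitaryDivisors hn (mem_powerset.1 hS))
    (fun d hd => prod_primeFactors_pow_factorization_of_mem_unitaryDivisors hd)
    (fun S hS => primeFactors_prod_pow_factorization (mem_powerset.1 hS))
    (fun d hd => by rw [prod_primeFactors_pow_factorization_of_mem_unitaryDivisors hd])
  obtain ⟨⟨hdn, -⟩, -⟩ := mem_unitaryDivisors.1 hd
  exact mem_powerset.2 (primeFactors_mono hdn hn)

end Nat

theorem isRegularMod_iff_gcd_sq_dvd {k n : ℕ} : IsRegularMod k n ↔ Nat.gcd (k ^ 2) n ∣ k := by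
  rw [← Int.gcd_natCast_natCast, Int.gcd_dvd_iff, IsRegularMod]
  push_cast
  constructor
  · rintro ⟨x, y, hy⟩
    exact ⟨x, -y, by linear_combination -hy⟩
  · rintro ⟨x, y, hy⟩
    exact ⟨x, ⟨-y, by linear_combination -hy⟩⟩

theorem isRegularMod_iff_coprime_gcd {k n : ℕ} (hn : n ≠ 0) :
    IsRegularMod k n ↔ Nat.Coprime (k.gcd n) (n / k.gcd n) := by
  rw [isRegularMod_iff_gcd_sq_dvd]
  have hd : 0 < k.gcd n := Nat.pos_of_ne_zero (Nat.gcd_ne_zero_right hn)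
  constructor
  · intro h
    -- `d * gcd(d, n / d)` divides `k²` and `n`, hence `k`, hence `gcd(k, n) = d`.
    set d := k.gcd n
    set c := d.gcd (n / d)
    have hn' : d * c ∣ n := (mul_dvd_mul_left d (Nat.gcd_dvd_right _ _)).trans
      (Nat.mul_div_cancel' (Nat.gcd_dvd_right k n)).dvd
    have hk : d * c ∣ k ^ 2 := sq k ▸
      mul_dvd_mul (Nat.gcd_dvd_left k n) ((Nat.gcd_dvd_left _ _).trans (Nat.gcd_dvd_left k n))
    have hdc : d * c ∣ d * 1 :=
      (mul_one d).symm ▸ Nat.dvd_gcd ((Nat.dvd_gcd hk hn').trans h) hn'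
    exact Nat.dvd_one.1 ((Nat.mul_dvd_mul_iff_left hd).1 hdc)
  · intro h
    -- With `k = d j` and `n = d m`, both `d` and `j` are coprime to `m`, so `gcd(k², n) = d`.
    have hj := Nat.coprime_div_gcd_div_gcd hd
    have hk := Nat.mul_div_cancel' (Nat.gcd_dvd_left k n)
    have hnm := Nat.mul_div_cancel' (Nat.gcd_dvd_right k n)
    generalize k.gcd n = d at *
    generalize k / d = j at *
    generalize n / d = m at *
    subst hk hnm
    rw [mul_pow, sq d, mul_assoc, Nat.gcd_mul_left, (h.mul_left (hj.pow_left 2)).gcd_eq_one,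
      mul_one]
    exact dvd_mul_right d j

theorem sum_reg_eq_sum_unitaryDivisors {M : Type*} [AddCommMonoid M] (f : ℕ → M) {n : ℕ}
    (hn : n ≠ 0) :
    ∑ k ∈ Reg n, f k =
      ∑ d ∈ n.unitaryDivisors, ∑ j ∈ Icc 1 (n / d) with j.Coprime (n / d), f (d * j) := by
  have hmaps : ∀ k ∈ Reg n, k.gcd n ∈ n.unitaryDivisors := fun k hk =>
    Nat.mem_unitaryDivisors.2 ⟨⟨Nat.gcd_dvd_right k n, hn⟩,
      (isRegularMod_iff_coprime_gcd hn).1 (mem_filter.1 hk).2⟩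
  rw [← sum_fiberwise_of_maps_to hmaps]
  refine sum_congr rfl fun d hd => ?_
  obtain ⟨⟨hdn, -⟩, hcop⟩ := Nat.mem_unitaryDivisors.1 hd
  rw [← Nat.sum_Icc_filter_gcd_eq f hn hdn, Reg, filter_filter]
  refine sum_congr (filter_congr fun k _ => ?_) fun _ _ => rfl
  refine and_iff_right_of_imp fun hk => ?_
  rw [isRegularMod_iff_coprime_gcd hn, hk]
  exact hcop

theorem sum_divisors_moebius_mul_eq_prod {R : Type*} [CommRing R] (g : ℕ →* R) {n : ℕ}
    (hn : n ≠ 0) : ∑ e ∈ n.divisors, (μ e : R) * g e = ∏ p ∈ n.primeFactors, (1 - g p) := by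
  rw [← sum_filter_of_ne (p := Squarefree) fun e _ he => ?_,
    Nat.sum_divisors_filter_squarefree hn, Nat.factors_eq, List.toFinset_coe, Nat.toFinset_factors]
  · simp_rw [sub_eq_add_neg, prod_one_add]
    refine sum_congr rfl fun S hS => ?_
    have hprime : ∀ p ∈ S, p.Prime := fun p hp =>
      Nat.prime_of_mem_primeFactors (mem_powerset.1 hS hp)
    simp only [prod_val, id]
    rw [isMultiplicative_moebius.map_prod_of_prime S hprime, Int.cast_prod, map_prod,
      ← prod_mul_distrib]
    refine prod_congr rfl fun p hp => ?_
    simp [moebius_apply_prime (hprime p hp)]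
  · by_contra hsq
    simp [moebius_eq_zero_of_not_squarefree hsq] at he

theorem sum_unitaryDivisors_sum_moebius_mul_zpow {K : Type*} [Field K] {n : ℕ} (hn : n ≠ 0)
    (s : ℤ) :
    ∑ d ∈ n.unitaryDivisors, ∑ e ∈ (n / d).divisors, (μ e : K) * ((d * e : ℕ) : K) ^ s =
      ∏ p ∈ n.primeFactors, ((p : K) ^ (s * n.factorization p) - (p : K) ^ s + 1) := by
  let g : ℕ →* K := (zpowGroupHom s).comp (Nat.castRingHom K : ℕ →* K)
  calc _ = ∑ d ∈ n.unitaryDivisors,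
        (d : K) ^ s * ∏ p ∈ n.primeFactors \ d.primeFactors, (1 - (p : K) ^ s) := by
        refine sum_congr rfl fun d hd => ?_
        obtain ⟨⟨hdn, -⟩, -⟩ := Nat.mem_unitaryDivisors.1 hd
        have hm : n / d ≠ 0 := right_ne_zero_of_mul (Nat.mul_div_cancel' hdn ▸ hn)
        calc ∑ e ∈ (n / d).divisors, (μ e : K) * ((d * e : ℕ) : K) ^ s
            = (d : K) ^ s * ∑ e ∈ (n / d).divisors, (μ e : K) * g e := by
              rw [mul_sum]
              refine sum_congr rfl fun e _ => ?_
              simp [g, mul_zpow]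
              ring
          _ = _ := by
              rw [sum_divisors_moebius_mul_eq_prod g hm,
                Nat.primeFactors_div_of_mem_unitaryDivisors hd]
              rfl
    _ = ∑ S ∈ n.primeFactors.powerset, (∏ p ∈ S, (p : K) ^ (s * n.factorization p)) *
          ∏ p ∈ n.primeFactors \ S, (1 - (p : K) ^ s) := by
        rw [Nat.sum_unitaryDivisors_eq_sum_powerset _ hn]
        refine sum_congr rfl fun S hS => ?_
        rw [Nat.primeFactors_prod_pow_factorization (mem_powerset.1 hS), Nat.cast_prod,
          ← prod_zpow]
        push_cast
        simp_rw [← zpow_natCast, ← zpow_mul, mul_comm s]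
    _ = _ := by
        rw [← prod_add]
        exact prod_congr rfl fun p _ => by ring

theorem sum_Icc_pow_eq_sum_bernoulli' {K : Type*} [Field K] [CharZero K] (x r : ℕ) :
    ∑ k ∈ Icc 1 x, (k : K) ^ r =
      ∑ i ∈ range (r + 1),
        (bernoulli' i : K) * ((r + 1).choose i * (x : K) ^ (r + 1 - i) / (r + 1)) := by
  have h := congr_arg (Rat.cast : ℚ → K) (sum_Ico_pow x r)
  rw [Ico_add_one_right_eq_Icc] at h
  push_cast at h
  simpa only [mul_div_assoc, mul_assoc] using h

theorem pow_mul_div_pow_sub {K : Type*} [Field K] {a : K} (ha : a ≠ 0) (x : K) {r i : ℕ}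
    (hi : i ≤ r + 1) : a ^ r * (x / a) ^ (r + 1 - i) = x ^ (r + 1 - i) * a ^ ((i : ℤ) - 1) := by
  rw [div_pow, ← zpow_natCast a r, ← zpow_natCast a (r + 1 - i)]
  field_simp
  rw [mul_assoc, ← zpow_add₀ ha, mul_comm]
  congr 2
  omega

theorem sum_range_bernoulli'_mul {K : Type*} [Field K] [CharZero K] {r : ℕ} (hr : 1 ≤ r)
    (g : ℕ → K) :
    ∑ i ∈ range (r + 1), (bernoulli' i : K) * g i =
      g 1 / 2 + ∑ m ∈ range (r / 2 + 1), (bernoulli (2 * m) : K) * g (2 * m) := by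
  rw [← sum_filter_not_add_sum_filter _ Even]
  congr 1
  · rw [sum_eq_single_of_mem 1 (by simp; omega) fun i hi hi1 => ?_]
    · simp [div_eq_inv_mul]
    · obtain ⟨hir, hodd⟩ := mem_filter.1 hi
      rw [bernoulli'_eq_zero_of_odd (Nat.not_even_iff_odd.1 hodd) (by grind), Rat.cast_zero,
        zero_mul]
  · refine (sum_nbij' (2 * ·) (· / 2) (fun m hm => ?_) (fun i hi => ?_) (fun m _ => ?_)
      (fun i hi => ?_) fun m hm => ?_).symm
    · rw [mem_range] at hm
      exact mem_filter.2 ⟨mem_range.2 (by omega), even_two_mul m⟩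
    · have hir := mem_range.1 (mem_filter.1 hi).1
      exact mem_range.2 (by omega)
    · omega
    · exact Nat.two_mul_div_two_of_even (mem_filter.1 hi).2
    · rw [bernoulli_eq_bernoulli'_of_ne_one (by omega)]

theorem sum_reg_pow_eq_sum_bernoulli' {K : Type*} [Field K] [CharZero K] {n : ℕ} (hn : n ≠ 0)
    (r : ℕ) :
    ∑ k ∈ Reg n, (k : K) ^ r =
      ∑ i ∈ range (r + 1), (bernoulli' i : K) *
        ((r + 1).choose i * (n : K) ^ (r + 1 - i) / (r + 1) * ∏ p ∈ n.primeFactors,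
          ((p : K) ^ (((i : ℤ) - 1) * n.factorization p) - (p : K) ^ ((i : ℤ) - 1) + 1)) := by
  simp_rw [← sum_unitaryDivisors_sum_moebius_mul_zpow hn, mul_sum]
  rw [sum_reg_eq_sum_unitaryDivisors _ hn, sum_comm]
  refine sum_congr rfl fun d hd => ?_
  rw [sum_comm, Nat.sum_Icc_filter_coprime_eq_sum_moebius]
  refine sum_congr rfl fun e he => ?_
  have hde : d * e ∣ n :=
    Nat.mul_dvd_of_dvd_div (Nat.mem_unitaryDivisors.1 hd).1.1 (Nat.mem_divisors.1 he).1
  have ha : ((d * e : ℕ) : K) ≠ 0 := Nat.cast_ne_zero.2 (ne_zero_of_dvd_ne_zero hn hde)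
  have hx : ((n / d / e : ℕ) : K) = n / (d * e : ℕ) := by
    rw [Nat.div_div_eq_div_mul, Nat.cast_div hde ha]
  calc μ e • ∑ i ∈ Icc 1 (n / d / e), ((d * (e * i) : ℕ) : K) ^ r
      = (μ e : K) * (((d * e : ℕ) : K) ^ r * ∑ i ∈ Icc 1 (n / d / e), (i : K) ^ r) := by
        simp only [zsmul_eq_mul, mul_sum]
        refine sum_congr rfl fun i _ => ?_
        push_cast
        ring
    _ = _ := by
        rw [sum_Icc_pow_eq_sum_bernoulli', hx, mul_sum, mul_sum]
        refine sum_congr rfl fun i hi => ?_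
        linear_combination ((μ e : K) * bernoulli' i * (r + 1).choose i / (r + 1)) *
          pow_mul_div_pow_sub ha (n : K) (mem_range.1 hi).le

theorem sum_pow_reg (n r : ℕ) (hn : 1 ≤ n) (hr : 1 ≤ r) :
    ∑ k ∈ Reg n, (k : ℝ) ^ r =
      (n : ℝ) ^ r / 2 + (n : ℝ) ^ r / (r + 1) *
        ∑ m ∈ Finset.range (r / 2 + 1),
          ((r + 1).choose (2 * m) : ℝ) * (bernoulli (2 * m) : ℝ) * rhoOneSubTwoM m n := by
  have hn0 : (n : ℝ) ≠ 0 := by positivity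
  rw [sum_reg_pow_eq_sum_bernoulli' (by omega) r, sum_range_bernoulli'_mul hr, mul_sum]
  congr 1
  · field_simp
    simp
  · refine sum_congr rfl fun m hm => ?_
    have hpow : (n : ℝ) ^ (r + 1 - 2 * m) = n ^ r * n ^ ((1 : ℤ) - 2 * m) := by
      rw [← zpow_natCast, ← zpow_natCast, ← zpow_add₀ hn0]
      congr 1
      have := mem_range.1 hm
      omega
    rw [rhoOneSubTwoM, hpow]
    push_cast
    ring
end

section
/- For every n ∈ ℕ, Π_{k ∈ Reg_n} k = n^{ρ(n)} · Π_{d || n} A(d), where A(m) = Π_{e | m} (e!/e^e)^{μ(m/e)} and the outer product on the right runs over the unitary divisors d of n. -/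
open Finset
open scoped Classical

/-- `A(m) = ∏_{e ∣ m} (e!/e^e)^{μ(m/e)}`. -/
noncomputable def Afun (m : ℕ) : ℝ :=
  ∏ e ∈ m.divisors,
    ((e.factorial : ℝ) / (e : ℝ) ^ e) ^ (ArithmeticFunction.moebius (m / e))

/-!
The `k ∈ [1, n]` with `gcd(k, n) = d` are the `d j` with `j` a totative of `n / d`, so their product
is `d^φ(n/d) ∏ totatives(n/d) = n^φ(n/d) T(n/d)`, where `T(m) = ∏ totatives(m) / m^φ(m)`.
Over all `d ∣ n` this gives `n! = n^n ∏_{e ∣ n} T(e)`, and Möbius inversion turns it into `T = A`.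
Finally `k` is regular mod `n` exactly when `gcd(k, n)` is a unitary divisor of `n`, so `Reg_n` is
the union of the blocks with `d` unitary, and `d ↦ n / d` permutes the unitary divisors.
-/

open scoped Nat

def totatives (n : ℕ) : Finset ℕ := {k ∈ Icc 1 n | k.Coprime n}

theorem card_totatives (n : ℕ) : #(totatives n) = φ n := by
  rw [← Nat.filter_coprime_Ico_eq_totient n 1, add_comm, Ico_add_one_right_eq_Icc, totatives]
  simp only [Nat.coprime_comm]

theorem filter_gcd_eq_image_totatives {d : ℕ} (hd : 0 < d) (e : ℕ) :
    {k ∈ Icc 1 (d * e) | k.gcd (d * e) = d} = (totatives e).image (d * ·) := by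
  ext k
  simp only [totatives, mem_filter, mem_Icc, mem_image]
  constructor
  · rintro ⟨⟨hk1, hke⟩, hgcd⟩
    obtain ⟨j, rfl⟩ : d ∣ k := hgcd ▸ Nat.gcd_dvd_left k (d * e)
    rw [Nat.gcd_mul_left, Nat.mul_eq_left hd.ne'] at hgcd
    exact ⟨j, ⟨⟨Nat.pos_of_mul_pos_left hk1, Nat.le_of_mul_le_mul_left hke hd⟩, hgcd⟩, rfl⟩
  · rintro ⟨j, ⟨⟨hj1, hje⟩, hcop⟩, rfl⟩
    refine ⟨⟨Nat.mul_pos hd hj1, Nat.mul_le_mul_left d hje⟩, ?_⟩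
    rw [Nat.gcd_mul_left, hcop.gcd_eq_one, mul_one]

theorem card_filter_gcd_eq {n d : ℕ} (hn : n ≠ 0) (hd : d ∣ n) :
    #{k ∈ Icc 1 n | k.gcd n = d} = φ (n / d) := by
  have hd0 : 0 < d := Nat.pos_of_dvd_of_pos hd (Nat.pos_of_ne_zero hn)
  obtain ⟨e, rfl⟩ := hd
  rw [filter_gcd_eq_image_totatives hd0, card_image_of_injective _ (mul_right_injective₀ hd0.ne'),
    card_totatives, Nat.mul_div_cancel_left e hd0]

noncomputable def totativesRatio (n : ℕ) : ℝ := (∏ k ∈ totatives n, (k : ℝ)) / (n : ℝ) ^ φ n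

theorem prod_filter_gcd_eq {n d : ℕ} (hn : n ≠ 0) (hd : d ∣ n) :
    ∏ k ∈ Icc 1 n with k.gcd n = d, (k : ℝ) = (n : ℝ) ^ φ (n / d) * totativesRatio (n / d) := by
  have hd0 : 0 < d := Nat.pos_of_dvd_of_pos hd (Nat.pos_of_ne_zero hn)
  obtain ⟨e, rfl⟩ := hd
  rw [filter_gcd_eq_image_totatives hd0, prod_image fun _ _ _ _ h => mul_left_cancel₀ hd0.ne' h,
    Nat.mul_div_cancel_left e hd0, totativesRatio]
  push_cast
  rw [prod_mul_distrib, prod_const, card_totatives, mul_pow]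
  field_simp

theorem prod_divisors_totativesRatio {n : ℕ} (hn : n ≠ 0) :
    ∏ e ∈ n.divisors, totativesRatio e = n ! / (n : ℝ) ^ n := by
  have hfiber : (n ! : ℝ) = ∏ d ∈ n.divisors, ∏ k ∈ Icc 1 n with k.gcd n = d, (k : ℝ) := by
    rw [prod_fiberwise_of_maps_to fun k _ => Nat.mem_divisors.2 ⟨Nat.gcd_dvd_right k n, hn⟩,
      ← prod_Ico_id_eq_factorial, Ico_add_one_right_eq_Icc]
    push_cast
    rfl
  rw [eq_div_iff (pow_ne_zero _ (by exact_mod_cast hn)), hfiber,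
    prod_congr rfl fun d hd => prod_filter_gcd_eq hn (Nat.dvd_of_mem_divisors hd), prod_mul_distrib,
    prod_pow_eq_pow_sum, Nat.prod_div_divisors, Nat.sum_div_divisors, Nat.sum_totient, mul_comm]

theorem totativesRatio_eq_Afun {m : ℕ} (hm : 0 < m) : totativesRatio m = Afun m := by
  have hratio : ∀ k > 0, totativesRatio k ≠ 0 := fun k hk =>
    div_ne_zero (prod_ne_zero_iff.2 fun j hj => by
      have : 1 ≤ j := (mem_Icc.1 (mem_filter.1 hj).1).1
      positivity) (by positivity)
  have hfact : ∀ k > 0, (k ! : ℝ) / (k : ℝ) ^ k ≠ 0 := fun k hk => by positivity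
  rw [← (ArithmeticFunction.prod_eq_iff_prod_pow_moebius_eq_of_nonzero hratio hfact).1
      (fun k hk => prod_divisors_totativesRatio hk.ne') m hm,
    Nat.prod_divisorsAntidiagonal' fun a b => ((b ! : ℝ) / (b : ℝ) ^ b) ^ ArithmeticFunction.moebius a]
  rfl

theorem isRegularMod_iff_coprime {k n : ℕ} (hn : 0 < n) :
    IsRegularMod k n ↔ Nat.Coprime (k.gcd n) (n / k.gcd n) := by
  constructor
  · rintro ⟨x, hx⟩
    set y := ((k : ℤ) * x - 1).natAbs
    have hky : Nat.Coprime k y :=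
      Int.isCoprime_iff_gcd_eq_one.1 (⟨x, -1, by ring⟩ : IsCoprime (k : ℤ) (k * x - 1))
    have hdvd : n ∣ k * y := by
      rw [← Int.natAbs_natCast n, ← Int.natAbs_natCast k, ← Int.natAbs_mul]
      exact Int.natAbs_dvd_natAbs.2 (by rwa [show (k : ℤ) * (k * x - 1) = k ^ 2 * x - k by ring])
    -- `k` and `kx - 1` are coprime, so `n ∣ k (kx - 1)` splits `n` into coprime factors
    have hsplit : n = n.gcd k * n.gcd y := by rw [← hky.gcd_mul n, Nat.gcd_eq_left hdvd]
    have hquot : n / n.gcd k = n.gcd y := by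
      nth_rewrite 1 [hsplit]
      exact Nat.mul_div_cancel_left _ (Nat.gcd_pos_of_pos_left k hn)
    rw [Nat.gcd_comm k n, hquot]
    exact (hky.gcd_left n).gcd_right n
  · intro hcop
    have hkm : Nat.Coprime k (n / k.gcd n) := by
      unfold Nat.Coprime
      rw [← Nat.gcd_eq_right (Nat.div_dvd_of_dvd (Nat.gcd_dvd_right k n)), ← Nat.gcd_assoc]
      exact hcop
    obtain ⟨u, v, huv⟩ := Nat.isCoprime_iff_coprime.2 hkm
    have hn' : (n : ℤ) = (k.gcd n : ℕ) * (n / k.gcd n : ℕ) := by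
      exact_mod_cast (Nat.mul_div_cancel' (Nat.gcd_dvd_right k n)).symm
    refine ⟨u, ?_⟩
    rw [hn', show (k : ℤ) ^ 2 * u - k = k * (k * u - 1) by ring]
    exact mul_dvd_mul (Int.natCast_dvd_natCast.2 (Nat.gcd_dvd_left k n)) ⟨-v, by linear_combination huv⟩

theorem mem_unitaryDivisors {n d : ℕ} :
    d ∈ unitaryDivisors n ↔ d ∣ n ∧ n ≠ 0 ∧ Nat.Coprime d (n / d) := by
  rw [unitaryDivisors, mem_filter, Nat.mem_divisors, and_assoc]

theorem gcd_mem_unitaryDivisors_iff_isRegularMod {k n : ℕ} (hn : 0 < n) :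
    k.gcd n ∈ unitaryDivisors n ↔ IsRegularMod k n := by
  simp [mem_unitaryDivisors, Nat.gcd_dvd_right, hn.ne', isRegularMod_iff_coprime hn]

theorem filter_Reg_gcd_eq {n d : ℕ} (hn : 0 < n) (hd : d ∈ unitaryDivisors n) :
    {k ∈ Reg n | k.gcd n = d} = {k ∈ Icc 1 n | k.gcd n = d} := by
  rw [Reg, filter_filter]
  refine filter_congr fun k _ => and_iff_right_of_imp fun hk => ?_
  rwa [← gcd_mem_unitaryDivisors_iff_isRegularMod hn, hk]

theorem prod_unitaryDivisors_div {M : Type*} [CommMonoid M] (n : ℕ) (f : ℕ → M) :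
    ∏ d ∈ unitaryDivisors n, f (n / d) = ∏ d ∈ unitaryDivisors n, f d := by
  have hinv : ∀ d ∈ unitaryDivisors n, n / (n / d) = d := fun d hd =>
    Nat.div_div_self (mem_unitaryDivisors.1 hd).1 (mem_unitaryDivisors.1 hd).2.1
  have hmem : ∀ d ∈ unitaryDivisors n, n / d ∈ unitaryDivisors n := fun d hd => by
    obtain ⟨hdvd, hn, hcop⟩ := mem_unitaryDivisors.1 hd
    exact mem_unitaryDivisors.2 ⟨Nat.div_dvd_of_dvd hdvd, hn, by rw [hinv d hd]; exact hcop.symm⟩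
  exact prod_nbij' (n / ·) (n / ·) hmem hmem hinv hinv fun _ _ => rfl

theorem prod_reg_eq_general (n : ℕ) :
    (∏ k ∈ Reg n, (k : ℝ)) =
      (n : ℝ) ^ (Reg n).card * ∏ d ∈ unitaryDivisors n, Afun d := by
  obtain rfl | hn := n.eq_zero_or_pos
  · simp [Reg, unitaryDivisors]
  have hmaps : ∀ k ∈ Reg n, k.gcd n ∈ unitaryDivisors n := fun k hk =>
    (gcd_mem_unitaryDivisors_iff_isRegularMod hn).2 (mem_filter.1 hk).2
  have hfiber : ∀ d ∈ unitaryDivisors n, ∏ k ∈ Reg n with k.gcd n = d, (k : ℝ) =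
      (n : ℝ) ^ φ (n / d) * Afun (n / d) := fun d hd => by
    have hdn := (mem_unitaryDivisors.1 hd).1
    rw [filter_Reg_gcd_eq hn hd, prod_filter_gcd_eq hn.ne' hdn,
      totativesRatio_eq_Afun (Nat.div_pos (Nat.le_of_dvd hn hdn) (Nat.pos_of_dvd_of_pos hdn hn))]
  have hcard : #(Reg n) = ∑ d ∈ unitaryDivisors n, φ (n / d) := by
    rw [card_eq_sum_card_fiberwise hmaps]
    exact sum_congr rfl fun d hd => by
      rw [filter_Reg_gcd_eq hn hd, card_filter_gcd_eq hn.ne' ((mem_unitaryDivisors.1 hd).1)]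
  rw [← prod_fiberwise_of_maps_to hmaps, prod_congr rfl hfiber, prod_mul_distrib,
    prod_pow_eq_pow_sum, ← hcard, prod_unitaryDivisors_div n Afun]

theorem prod_reg_eq (n : ℕ) (hn : 1 ≤ n) :
    (∏ k ∈ Reg n, (k : ℝ)) =
      (n : ℝ) ^ (Reg n).card * ∏ d ∈ unitaryDivisors n, Afun d :=
  prod_reg_eq_general n
end
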